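/- arXiv:2502.11507 — 2 statements merged into one kernel-verified Lean document; each statement's English description precedes it below -/
import Mathlib

section
/- For the Dhillon failure rate r₁(x) = θν x^{θ-1}/(ν x^θ + 1) with θ > 1 and ν > 0, r₁ has an inverted-bathtub (unimodal) shape: r₁(x) → 0 as x → 0⁺, r₁(x) → 0 as x → ∞, and r₁ attains a unique maximum at x* = ((θ-1)/ν)^{1/θ}, being strictly increasing on (0, x*) and strictly decreasing on (x*, ∞). -/
open Real Filter Set

/-! By the quotient rule, for `x > 0`
`r₁'(x) = θ ν x^(θ-2) ((θ - 1) - ν x^θ) / (ν x^θ + 1)²`,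
whose sign is that of `(θ - 1) - ν x^θ`: positive below `x* = ((θ-1)/ν)^(1/θ)` and negative
above it. Hence `r₁` rises strictly up to `x*` and falls strictly afterwards. The limit at `0⁺`
is continuity at `0` (both exponents are positive), and at `∞` one has `0 ≤ r₁(x) ≤ θ / x`. -/

noncomputable def dhillonRate (ν θ x : ℝ) : ℝ := θ * ν * x ^ (θ - 1) / (ν * x ^ θ + 1)

noncomputable def dhillonMode (ν θ : ℝ) : ℝ := ((θ - 1) / ν) ^ (1 / θ)

section

variable {ν θ x : ℝ}

theorem hasDerivAt_dhillonRate (hx : 0 < x) (hden : ν * x ^ θ + 1 ≠ 0) :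
    HasDerivAt (dhillonRate ν θ)
      (θ * ν * x ^ (θ - 2) * (θ - 1 - ν * x ^ θ) / (ν * x ^ θ + 1) ^ 2) x := by
  have hnum := (hasDerivAt_rpow_const (p := θ - 1) (Or.inl hx.ne')).const_mul (θ * ν)
  have hdenom := ((hasDerivAt_rpow_const (p := θ) (Or.inl hx.ne')).const_mul ν).add_const 1
  refine (hnum.div hdenom hden).congr_deriv ?_
  have hsq : x ^ (θ - 1) * x ^ (θ - 1) = x ^ (θ - 2) * x ^ θ := by
    rw [← rpow_add hx, ← rpow_add hx]
    ring_nf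
  rw [show θ - 1 - 1 = θ - 2 by ring]
  congr 1
  linear_combination (-(θ ^ 2 * ν ^ 2)) * hsq

theorem dhillonMode_rpow (hν : 0 < ν) (hθ : 1 < θ) : dhillonMode ν θ ^ θ = (θ - 1) / ν := by
  rw [dhillonMode, one_div, rpow_inv_rpow (div_pos (by linarith) hν).le (by linarith)]

theorem dhillonMode_pos (hν : 0 < ν) (hθ : 1 < θ) : 0 < dhillonMode ν θ :=
  rpow_pos_of_pos (div_pos (by linarith) hν) _

theorem lt_dhillonMode_iff (hν : 0 < ν) (hθ : 1 < θ) (hx : 0 ≤ x) :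
    x < dhillonMode ν θ ↔ ν * x ^ θ < θ - 1 := by
  rw [← rpow_lt_rpow_iff hx (dhillonMode_pos hν hθ).le (by linarith : 0 < θ),
    dhillonMode_rpow hν hθ, lt_div_iff₀ hν, mul_comm]

theorem dhillonMode_lt_iff (hν : 0 < ν) (hθ : 1 < θ) (hx : 0 ≤ x) :
    dhillonMode ν θ < x ↔ θ - 1 < ν * x ^ θ := by
  rw [← rpow_lt_rpow_iff (dhillonMode_pos hν hθ).le hx (by linarith : 0 < θ),
    dhillonMode_rpow hν hθ, div_lt_iff₀ hν, mul_comm]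

theorem continuousOn_dhillonRate (hν : 0 ≤ ν) : ContinuousOn (dhillonRate ν θ) (Ioi 0) :=
  fun x (hx : 0 < x) => (hasDerivAt_dhillonRate hx (by positivity)).continuousAt.continuousWithinAt

theorem dhillonRate_strictMonoOn (hν : 0 < ν) (hθ : 1 < θ) :
    StrictMonoOn (dhillonRate ν θ) (Ioc 0 (dhillonMode ν θ)) := by
  refine strictMonoOn_of_deriv_pos (convex_Ioc _ _)
    ((continuousOn_dhillonRate hν.le).mono Ioc_subset_Ioi_self) fun x hx => ?_
  obtain ⟨hx0, hxm⟩ : 0 < x ∧ x < dhillonMode ν θ := by rwa [interior_Ioc] at hx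
  rw [(hasDerivAt_dhillonRate hx0 (by positivity)).deriv]
  have hsign := (lt_dhillonMode_iff hν hθ hx0.le).1 hxm
  have hpow : 0 < x ^ (θ - 2) := rpow_pos_of_pos hx0 _
  exact div_pos (mul_pos (by positivity) (by linarith)) (by positivity)

theorem dhillonRate_strictAntiOn (hν : 0 < ν) (hθ : 1 < θ) :
    StrictAntiOn (dhillonRate ν θ) (Ici (dhillonMode ν θ)) := by
  refine strictAntiOn_of_deriv_neg (convex_Ici _)
    ((continuousOn_dhillonRate hν.le).mono fun x hx => (dhillonMode_pos hν hθ).trans_le hx)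
    fun x hx => ?_
  rw [interior_Ici] at hx
  have hx0 : 0 < x := (dhillonMode_pos hν hθ).trans hx
  rw [(hasDerivAt_dhillonRate hx0 (by positivity)).deriv]
  have hsign := (dhillonMode_lt_iff hν hθ hx0.le).1 hx
  have hpow : 0 < x ^ (θ - 2) := rpow_pos_of_pos hx0 _
  exact div_neg_of_neg_of_pos (mul_neg_of_pos_of_neg (by positivity) (by linarith))
    (by positivity)

theorem tendsto_dhillonRate_zero (hθ : 1 < θ) :
    Tendsto (dhillonRate ν θ) (nhds 0) (nhds 0) := by
  have hcont : ContinuousAt (dhillonRate ν θ) 0 := by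
    refine (continuousAt_const.mul (continuousAt_rpow_const 0 _ (Or.inr (by linarith)))).div
      (continuousAt_const.mul (continuousAt_rpow_const 0 _ (Or.inr (by linarith)))
        |>.add continuousAt_const) ?_
    simp [zero_rpow (by linarith : θ ≠ 0)]
  simpa [dhillonRate, zero_rpow (by linarith : θ - 1 ≠ 0)] using hcont.tendsto

theorem dhillonRate_le_div (hν : 0 < ν) (hθ : 0 ≤ θ) (hx : 0 < x) :
    dhillonRate ν θ x ≤ θ / x := by
  have hpow : x ^ θ = x ^ (θ - 1) * x := by
    rw [← rpow_add_one hx.ne']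
    ring_nf
  have hpos : 0 < x ^ (θ - 1) := rpow_pos_of_pos hx _
  calc dhillonRate ν θ x ≤ θ * ν * x ^ (θ - 1) / (ν * x ^ θ) :=
        div_le_div_of_nonneg_left (by positivity) (by positivity) (by linarith)
    _ = θ / x := by
        rw [hpow]
        field_simp

theorem tendsto_dhillonRate_atTop (hν : 0 < ν) (hθ : 0 ≤ θ) :
    Tendsto (dhillonRate ν θ) atTop (nhds 0) := by
  refine tendsto_of_tendsto_of_tendsto_of_le_of_le' tendsto_const_nhds
    ((tendsto_const_nhds (x := θ)).div_atTop tendsto_id) ?_ ?_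
  · filter_upwards [eventually_gt_atTop 0] with x hx
    have : 0 < x ^ (θ - 1) := rpow_pos_of_pos hx _
    unfold dhillonRate
    positivity
  · filter_upwards [eventually_gt_atTop 0] with x hx
    exact dhillonRate_le_div hν hθ hx

end

/-- For `θ > 1` the Dhillon failure rate is unimodal (inverted bathtub): it vanishes
at `0⁺` and at `∞`, is strictly increasing up to `x* = ((θ-1)/ν)^{1/θ}`, strictly
decreasing afterwards, and attains a unique maximum at `x*`. -/
theorem dhillon_frf_inverted_bathtub (ν θ : ℝ) (hν : 0 < ν) (hθ : 1 < θ) :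
    Tendsto (fun x => θ * ν * x ^ (θ - 1) / (ν * x ^ θ + 1))
        (nhdsWithin 0 (Set.Ioi 0)) (nhds 0) ∧
      Tendsto (fun x => θ * ν * x ^ (θ - 1) / (ν * x ^ θ + 1)) atTop (nhds 0) ∧
      StrictMonoOn (fun x => θ * ν * x ^ (θ - 1) / (ν * x ^ θ + 1))
        (Set.Ioc 0 (((θ - 1) / ν) ^ (1 / θ))) ∧
      StrictAntiOn (fun x => θ * ν * x ^ (θ - 1) / (ν * x ^ θ + 1))
        (Set.Ici (((θ - 1) / ν) ^ (1 / θ))) ∧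
      ∀ x ∈ Set.Ioi (0 : ℝ), x ≠ ((θ - 1) / ν) ^ (1 / θ) →
        θ * ν * x ^ (θ - 1) / (ν * x ^ θ + 1)
          < θ * ν * (((θ - 1) / ν) ^ (1 / θ)) ^ (θ - 1) /
              (ν * (((θ - 1) / ν) ^ (1 / θ)) ^ θ + 1) := by
  have hmono := dhillonRate_strictMonoOn hν hθ
  have hanti := dhillonRate_strictAntiOn hν hθ
  refine ⟨(tendsto_dhillonRate_zero hθ).mono_left nhdsWithin_le_nhds,
    tendsto_dhillonRate_atTop hν (by linarith), hmono, hanti, fun x hx hne => ?_⟩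
  rcases hne.lt_or_gt with hlt | hgt
  · exact hmono ⟨hx, hlt.le⟩ ⟨dhillonMode_pos hν hθ, le_rfl⟩ hlt
  · exact hanti self_mem_Ici hgt.le hgt
end

section
/- For the BFM model, the function W_BFM(x) = 1 - exp{1 - e^{(ζx)^τ}}/(ν x^θ + 1), with all parameters positive, is a cumulative distribution function on (0, ∞): it is monotone nondecreasing, tends to 0 as x → 0⁺, and tends to 1 as x → ∞. -/
/-!
The survival function `exp (1 - exp ((ζ x) ^ τ)) / (ν x ^ θ + 1)` is a nonincreasing numerator
over a nondecreasing positive denominator. At `x = 0` both factors equal `1`, and as `x → ∞`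
the numerator tends to `0` while the denominator stays at least `1`.
-/

open Real Filter Set Topology

noncomputable def bfmSurvival (ν θ τ ζ x : ℝ) : ℝ :=
  exp (1 - exp ((ζ * x) ^ τ)) / (ν * x ^ θ + 1)

section

variable {ν θ τ ζ : ℝ}

lemma one_le_mul_rpow_add_one (hν : 0 ≤ ν) {x : ℝ} (hx : 0 ≤ x) : 1 ≤ ν * x ^ θ + 1 :=
  le_add_of_nonneg_left (mul_nonneg hν (rpow_nonneg hx θ))

lemma bfmSurvival_antitoneOn (hν : 0 ≤ ν) (hθ : 0 ≤ θ) (hτ : 0 ≤ τ) (hζ : 0 ≤ ζ) :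
    AntitoneOn (bfmSurvival ν θ τ ζ) (Ici 0) := by
  intro x hx y hy hxy
  have hnum : exp (1 - exp ((ζ * y) ^ τ)) ≤ exp (1 - exp ((ζ * x) ^ τ)) := by
    gcongr
    exact mul_nonneg hζ hx
  have hden : ν * x ^ θ + 1 ≤ ν * y ^ θ + 1 := by gcongr
  exact div_le_div₀ (exp_nonneg _) hnum
    (zero_lt_one.trans_le (one_le_mul_rpow_add_one hν hx)) hden

lemma bfmSurvival_zero (hθ : θ ≠ 0) (hτ : τ ≠ 0) : bfmSurvival ν θ τ ζ 0 = 1 := by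
  simp [bfmSurvival, zero_rpow hθ, zero_rpow hτ]

lemma continuousAt_bfmSurvival_zero (hθ : 0 < θ) (hτ : 0 ≤ τ) :
    ContinuousAt (bfmSurvival ν θ τ ζ) 0 := by
  have hpow : ContinuousAt (fun x : ℝ => x ^ θ) 0 := continuousAt_rpow_const 0 θ (Or.inr hθ.le)
  have hpow' : ContinuousAt (fun x : ℝ => (ζ * x) ^ τ) 0 :=
    (continuousAt_rpow_const (ζ * 0) τ (Or.inr hτ)).comp (by fun_prop)
  exact ContinuousAt.div (by fun_prop) (by fun_prop) (by simp [zero_rpow hθ.ne'])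

lemma tendsto_bfmSurvival_nhdsGT_zero (hθ : 0 < θ) (hτ : 0 < τ) :
    Tendsto (bfmSurvival ν θ τ ζ) (𝓝[>] 0) (𝓝 1) := by
  rw [← bfmSurvival_zero (ν := ν) (ζ := ζ) hθ.ne' hτ.ne']
  exact (continuousAt_bfmSurvival_zero hθ hτ.le).tendsto.mono_left nhdsWithin_le_nhds

lemma tendsto_exp_one_sub_exp_rpow_atTop (hτ : 0 < τ) (hζ : 0 < ζ) :
    Tendsto (fun x => exp (1 - exp ((ζ * x) ^ τ))) atTop (𝓝 0) := by
  have hpow : Tendsto (fun x : ℝ => (ζ * x) ^ τ) atTop atTop :=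
    (tendsto_rpow_atTop hτ).comp (tendsto_id.const_mul_atTop hζ)
  refine tendsto_exp_atBot.comp (tendsto_atBot_add_const_left _ 1 ?_)
  exact tendsto_neg_atTop_atBot.comp (tendsto_exp_atTop.comp hpow)

lemma tendsto_bfmSurvival_atTop (hν : 0 ≤ ν) (hτ : 0 < τ) (hζ : 0 < ζ) :
    Tendsto (bfmSurvival ν θ τ ζ) atTop (𝓝 0) := by
  refine tendsto_of_tendsto_of_tendsto_of_le_of_le' tendsto_const_nhds
    (tendsto_exp_one_sub_exp_rpow_atTop hτ hζ) ?_ ?_ <;>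
    filter_upwards [eventually_ge_atTop 0] with x hx
  · exact div_nonneg (exp_nonneg _) (zero_le_one.trans (one_le_mul_rpow_add_one hν hx))
  · exact div_le_self (exp_nonneg _) (one_le_mul_rpow_add_one hν hx)

end

/-- The BFM CDF is nondecreasing on `(0, ∞)`, tends to `0` as `x → 0⁺`, and tends to `1`
as `x → ∞`. -/
theorem bfm_cdf (ν θ τ ζ : ℝ) (hν : 0 < ν) (hθ : 0 < θ) (hτ : 0 < τ) (hζ : 0 < ζ) :
    MonotoneOn (fun x => 1 - Real.exp (1 - Real.exp ((ζ * x) ^ τ)) / (ν * x ^ θ + 1))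
        (Set.Ioi (0 : ℝ)) ∧
      Tendsto (fun x => 1 - Real.exp (1 - Real.exp ((ζ * x) ^ τ)) / (ν * x ^ θ + 1))
        (nhdsWithin 0 (Set.Ioi 0)) (nhds 0) ∧
      Tendsto (fun x => 1 - Real.exp (1 - Real.exp ((ζ * x) ^ τ)) / (ν * x ^ θ + 1))
        atTop (nhds 1) := by
  change MonotoneOn (fun x => 1 - bfmSurvival ν θ τ ζ x) _ ∧
    Tendsto (fun x => 1 - bfmSurvival ν θ τ ζ x) _ _ ∧
    Tendsto (fun x => 1 - bfmSurvival ν θ τ ζ x) _ _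
  have hanti := (bfmSurvival_antitoneOn hν.le hθ.le hτ.le hζ.le).mono Ioi_subset_Ici_self
  refine ⟨fun x hx y hy hxy => sub_le_sub_left (hanti hx hy hxy) 1, ?_, ?_⟩
  · simpa using (tendsto_bfmSurvival_nhdsGT_zero (ν := ν) (ζ := ζ) hθ hτ).const_sub 1
  · simpa using (tendsto_bfmSurvival_atTop (θ := θ) hν.le hτ hζ).const_sub 1
end
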